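/- arXiv:0807.2819 — 4 statements merged into one kernel-verified Lean document; each statement's English description precedes it below -/
import Mathlib

section
/- Let 0 < α ≤ 1 and m ≥ 1 an integer, and let (d_k) be the solution of the recurrence d_k = 0 for k < m, ((k+2α)/2)·d_k = ((k-1)/2)·d_{k-1} + α·[k=m] for k ≥ m. Then there exists a constant C > 0 such that d_k ≤ C/k for all k ≥ 1. -/
/-! Multiplying the recurrence by 2 gives `(k + 2α) d_k = (k - 1) d_{k-1} + 2α [k = m]`, and the
right-hand side always lies in `[0, 2α]`: at `k = m` it is `2α` because `d_{m-1} = 0`, and for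
`k > m` it is `(k - 1) d_{k-1}`, which is in `[0, 2α]` by induction. Hence `0 ≤ d_k` and
`k d_k ≤ 2α (k / (k + 2α)) ≤ 2α` for every `k ≥ m`, so `C = 2α` works. -/

lemma nonneg_and_mul_le_of_add_mul_eq {a k x z : ℝ} (ha : 0 < a) (hk : 0 ≤ k)
    (hz₀ : 0 ≤ z) (hza : z ≤ a) (h : (k + a) * x = z) : 0 ≤ x ∧ k * x ≤ a := by
  have hx : 0 ≤ x := by
    by_contra! hx
    nlinarith
  exact ⟨hx, by nlinarith⟩

lemma nonneg_and_mul_le_of_recurrence {α : ℝ} (hα : 0 < α) {m : ℕ} {d : ℕ → ℝ}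
    (hprev : d (m - 1) = 0)
    (hrec : ∀ k, m ≤ k →
      ((k : ℝ) + 2 * α) / 2 * d k =
        ((k : ℝ) - 1) / 2 * d (k - 1) + α * (if k = m then 1 else 0))
    {k : ℕ} (hk : m ≤ k) : 0 ≤ d k ∧ k * d k ≤ 2 * α := by
  induction k, hk using Nat.le_induction with
  | base =>
    have h := hrec m le_rfl
    rw [hprev, if_pos rfl] at h
    exact nonneg_and_mul_le_of_add_mul_eq (by positivity) m.cast_nonneg (by positivity) le_rfl
      (by linarith)
  | succ k hmk ih =>
    have h := hrec (k + 1) (by omega)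
    rw [if_neg (by omega), Nat.add_sub_cancel] at h
    push_cast at h
    exact nonneg_and_mul_le_of_add_mul_eq (by positivity) (k + 1).cast_nonneg
      (mul_nonneg k.cast_nonneg ih.1) ih.2 (by push_cast; linarith)

theorem stmt_3_general (α : ℝ) (hα0 : 0 < α) (m : ℕ) (hm : 1 ≤ m)
    (d : ℕ → ℝ)
    (h0 : ∀ k, k < m → d k = 0)
    (hrec : ∀ k, m ≤ k →
      ((k : ℝ) + 2 * α) / 2 * d k =
        ((k : ℝ) - 1) / 2 * d (k - 1) + α * (if k = m then 1 else 0)) :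
    ∃ C : ℝ, 0 < C ∧ ∀ k : ℕ, 1 ≤ k → d k ≤ C / k := by
  refine ⟨2 * α, by positivity, fun k hk => ?_⟩
  rcases lt_or_ge k m with hkm | hmk
  · rw [h0 k hkm]
    positivity
  · have hk₀ : (0 : ℝ) < k := by exact_mod_cast hk
    rw [le_div_iff₀ hk₀, mul_comm]
    exact (nonneg_and_mul_le_of_recurrence hα0 (h0 _ (by omega)) hrec hmk).2

theorem stmt_3 (α : ℝ) (hα0 : 0 < α) (hα1 : α ≤ 1) (m : ℕ) (hm : 1 ≤ m)
    (d : ℕ → ℝ)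
    (h0 : ∀ k, k < m → d k = 0)
    (hrec : ∀ k, m ≤ k →
      ((k : ℝ) + 2 * α) / 2 * d k =
        ((k : ℝ) - 1) / 2 * d (k - 1) + α * (if k = m then 1 else 0)) :
    ∃ C : ℝ, 0 < C ∧ ∀ k : ℕ, 1 ≤ k → d k ≤ C / k :=
  stmt_3_general α hα0 m hm d h0 hrec
end

section
/- Let 0 < α ≤ 1 and m ≥ 1 an integer, and let (d_k) be the solution of d_k = 0 for k < m, ((k+2α)/2)·d_k = ((k-1)/2)·d_{k-1} + α·[k=m] for k ≥ m. Then ∑_{k=m}^{∞} d_k = 1; in particular (d_k) is a probability distribution on the integers k ≥ m. -/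
/-!
Writing `x N = (m + N) d_{m+N}`, the recurrence says `2α d_{m+N+1} = x N - x (N+1)`, so the partial
sums telescope: `2α ∑_{k ≤ N} d_{m+k} = 2α - x N`. The terms are nonnegative, hence the series
converges and `x N` has a limit; that limit is `0`, since otherwise `d_{m+N}` would dominate a
multiple of the harmonic series.
-/

open Filter Finset Topology

theorem eq_zero_of_summable_of_tendsto_natCast_mul {f : ℕ → ℝ} {L : ℝ} (hf : Summable f)
    (h : Tendsto (fun n : ℕ => (n : ℝ) * f n) atTop (𝓝 L)) : L = 0 := by
  by_contra hL
  have hL' : 0 < |L| := abs_pos.2 hL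
  have hbound : ∀ᶠ n : ℕ in atTop, ‖(n : ℝ)⁻¹‖ ≤ 2 / |L| * ‖f n‖ := by
    filter_upwards [h.abs.eventually (eventually_ge_nhds (half_lt_self hL')),
      eventually_gt_atTop 0] with n hn hn0
    have hpos : (0 : ℝ) < n := by exact_mod_cast hn0
    rw [abs_mul, abs_of_pos hpos] at hn
    rw [Real.norm_eq_abs, abs_inv, abs_of_pos hpos, Real.norm_eq_abs, inv_le_iff_one_le_mul₀ hpos]
    calc (1 : ℝ) = 2 / |L| * (|L| / 2) := by field_simp
      _ ≤ 2 / |L| * (n * |f n|) := by gcongr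
      _ = 2 / |L| * |f n| * n := by ring
  exact Real.not_summable_natCast_inv
    (Summable.of_norm_bounded_eventually_nat (hf.norm.mul_left (2 / |L|)) hbound)

/-- In the application `e n = d (m + n)`, `a = m` and `c = 2α`. -/
structure SatisfiesRecurrence (a c : ℝ) (e : ℕ → ℝ) : Prop where
  zero : (a + c) * e 0 = c
  succ : ∀ n : ℕ, (a + n + 1 + c) * e (n + 1) = (a + n) * e n

namespace SatisfiesRecurrence

variable {a c : ℝ} {e : ℕ → ℝ}

theorem nonneg (h : SatisfiesRecurrence a c e) (ha : 0 ≤ a) (hc : 0 < c) (n : ℕ) :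
    0 ≤ e n := by
  induction n with
  | zero =>
    exact nonneg_of_mul_nonneg_right (a := a + c) (by rw [h.zero]; positivity) (by positivity)
  | succ n ih =>
    exact nonneg_of_mul_nonneg_right (a := a + n + 1 + c) (by rw [h.succ n]; positivity)
      (by positivity)

theorem mul_sum_range_succ (h : SatisfiesRecurrence a c e) (N : ℕ) :
    c * ∑ k ∈ range (N + 1), e k = c - (a + N) * e N := by
  induction N with
  | zero => simpa using by linear_combination h.zero
  | succ N ih =>
    rw [sum_range_succ, mul_add, ih]
    push_cast
    linear_combination h.succ N

theorem summable (h : SatisfiesRecurrence a c e) (ha : 0 ≤ a) (hc : 0 < c) : Summable e := by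
  refine summable_of_sum_range_le (c := 1) (h.nonneg ha hc) fun N => ?_
  cases N with
  | zero => simp
  | succ N =>
    have hx : 0 ≤ (a + N) * e N := mul_nonneg (by positivity) (h.nonneg ha hc N)
    have := h.mul_sum_range_succ N
    exact le_of_mul_le_mul_left (by linarith) hc

theorem tendsto_add_mul (h : SatisfiesRecurrence a c e) (ha : 0 ≤ a) (hc : 0 < c) :
    Tendsto (fun N : ℕ => (a + N) * e N) atTop (𝓝 (c - c * ∑' k, e k)) := by
  have hsum := ((h.summable ha hc).hasSum.tendsto_sum_nat.comp (tendsto_add_atTop_nat 1)).const_mul c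
  refine (tendsto_const_nhds.sub hsum).congr fun N => ?_
  simp only [Function.comp_apply, h.mul_sum_range_succ]
  ring

theorem hasSum_one (h : SatisfiesRecurrence a c e) (ha : 0 ≤ a) (hc : 0 < c) : HasSum e 1 := by
  have hsum := h.summable ha hc
  have hlim : Tendsto (fun N : ℕ => (N : ℝ) * e N) atTop (𝓝 (c - c * ∑' k, e k)) := by
    have hae : Tendsto (fun N => a * e N) atTop (𝓝 0) := by
      simpa using hsum.tendsto_atTop_zero.const_mul a
    simpa [add_mul] using (h.tendsto_add_mul ha hc).sub hae
  have hzero := eq_zero_of_summable_of_tendsto_natCast_mul hsum hlim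
  have hS : ∑' k, e k = 1 := by
    have : c * (1 - ∑' k, e k) = 0 := by linear_combination hzero
    linarith [(mul_eq_zero.1 this).resolve_left hc.ne']
  exact hS ▸ hsum.hasSum

end SatisfiesRecurrence

theorem stmt_4_general (α : ℝ) (hα0 : 0 < α) (m : ℕ) (hm : 1 ≤ m)
    (d : ℕ → ℝ)
    (h0 : ∀ k, k < m → d k = 0)
    (hrec : ∀ k, m ≤ k →
      ((k : ℝ) + 2 * α) / 2 * d k =
        ((k : ℝ) - 1) / 2 * d (k - 1) + α * (if k = m then 1 else 0)) :
    ∑' k : ℕ, d (m + k) = 1 := by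
  have hrecurrence : SatisfiesRecurrence m (2 * α) (fun n => d (m + n)) := by
    constructor
    · have h := hrec m le_rfl
      rw [if_pos rfl, h0 (m - 1) (by omega)] at h
      simpa using by linear_combination 2 * h
    · intro n
      have h := hrec (m + n + 1) (by omega)
      rw [if_neg (by omega), show m + n + 1 - 1 = m + n by omega] at h
      push_cast at h ⊢
      linear_combination 2 * h
  exact (hrecurrence.hasSum_one m.cast_nonneg (by positivity)).tsum_eq

theorem stmt_4 (α : ℝ) (hα0 : 0 < α) (hα1 : α ≤ 1) (m : ℕ) (hm : 1 ≤ m)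
    (d : ℕ → ℝ)
    (h0 : ∀ k, k < m → d k = 0)
    (hrec : ∀ k, m ≤ k →
      ((k : ℝ) + 2 * α) / 2 * d k =
        ((k : ℝ) - 1) / 2 * d (k - 1) + α * (if k = m then 1 else 0)) :
    ∑' k : ℕ, d (m + k) = 1 :=
  stmt_4_general α hα0 m hm d h0 hrec
end

section
/- Let α be real with 1/2 < α ≤ 1 and m ≥ 1 an integer, and let d_k = 2α·Γ(k)·Γ(m+2α)/(Γ(m)·Γ(k+1+2α)) for k ≥ m. Then ∑_{k=m}^{∞} k·d_k = 2αm/(2α−1). -/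
/-!
With `a = 2α > 1` we have `k d_k = (a Γ(m + a) / Γ(m)) · Γ(k + 1) / Γ(k + 1 + a)`, and
`Γ(k + 1) / Γ(k + 1 + a) = (g k - g (k + 1)) / (a - 1)` for `g x = Γ(x + 1) / Γ(x + a)`, which is
decreasing. So the series telescopes to `g m / (a - 1)` as soon as `g x → 0`; this follows from
the log-convexity of `Γ`, which gives `Γ(x + 1) / Γ(x + 1 + t) ≤ x ^ (-t)`.
-/

open Real Filter Topology

lemma hasSum_sub_succ_of_antitone {g : ℕ → ℝ} {l : ℝ} (hg : Antitone g)
    (hlim : Tendsto g atTop (𝓝 l)) : HasSum (fun n ↦ g n - g (n + 1)) (g 0 - l) := by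
  rw [hasSum_iff_tendsto_nat_of_nonneg fun n ↦ sub_nonneg.2 (hg n.le_succ)]
  simp only [Finset.sum_range_sub']
  exact tendsto_const_nhds.sub hlim

namespace Real

/-- The slope of the convex function `log ∘ Γ` on `[x, x + 1]` is `log x`, so its slope on
`[x + 1, x + 1 + t]` is at least `log x`. -/
lemma rpow_mul_Gamma_add_one_le_Gamma_add {x t : ℝ} (hx : 0 < x) (ht : 0 < t) :
    x ^ t * Gamma (x + 1) ≤ Gamma (x + 1 + t) := by
  have hΓx := Gamma_pos_of_pos hx
  have hslope := convexOn_log_Gamma.slope_mono_adjacent (x := x) (y := x + 1) (z := x + 1 + t)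
    hx (by simp only [Set.mem_Ioi]; positivity) (by linarith) (by linarith)
  simp only [Function.comp, Gamma_add_one hx.ne', log_mul hx.ne' hΓx.ne', add_sub_cancel_left,
    add_sub_cancel_right, div_one, le_div_iff₀ ht] at hslope
  have key : t * log x + log (Gamma (x + 1)) ≤ log (Gamma (x + 1 + t)) := by
    rw [Gamma_add_one hx.ne', log_mul hx.ne' hΓx.ne']
    linarith
  calc x ^ t * Gamma (x + 1) = exp (t * log x + log (Gamma (x + 1))) := by
        rw [exp_add, rpow_def_of_pos hx, mul_comm t, exp_log (Gamma_pos_of_pos (by positivity))]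
    _ ≤ exp (log (Gamma (x + 1 + t))) := exp_le_exp.2 key
    _ = Gamma (x + 1 + t) := exp_log (Gamma_pos_of_pos (by positivity))

lemma tendsto_Gamma_add_one_div_Gamma_add_atTop {t : ℝ} (ht : 0 < t) :
    Tendsto (fun x ↦ Gamma (x + 1) / Gamma (x + 1 + t)) atTop (𝓝 0) := by
  refine squeeze_zero' ?_ ?_ (tendsto_rpow_neg_atTop ht)
  · filter_upwards [eventually_gt_atTop 0] with x hx
    have := Gamma_pos_of_pos (show 0 < x + 1 by linarith)
    have := Gamma_pos_of_pos (show 0 < x + 1 + t by linarith)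
    positivity
  · filter_upwards [eventually_gt_atTop 0] with x hx
    rw [rpow_neg hx.le, div_le_iff₀ (Gamma_pos_of_pos (by positivity)), inv_mul_eq_div,
      le_div_iff₀ (rpow_pos_of_pos hx t)]
    linarith [rpow_mul_Gamma_add_one_le_Gamma_add hx ht]

lemma Gamma_div_Gamma_sub_Gamma_div_Gamma_add_one {a y : ℝ} (ha : 1 < a) (hy : 0 < y + 1) :
    Gamma (y + 1) / Gamma (y + a) - Gamma (y + 1 + 1) / Gamma (y + 1 + a) =
      (a - 1) * (Gamma (y + 1) / Gamma (y + 1 + a)) := by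
  have hya : 0 < y + a := by linarith
  have := (Gamma_pos_of_pos hya).ne'
  rw [Gamma_add_one hy.ne', add_right_comm, Gamma_add_one hya.ne']
  field_simp
  ring

lemma hasSum_Gamma_div_Gamma {a x : ℝ} (ha : 1 < a) (hx : -1 < x) :
    HasSum (fun k : ℕ ↦ Gamma (x + k + 1) / Gamma (x + k + 1 + a))
      (Gamma (x + 1) / ((a - 1) * Gamma (x + a))) := by
  have hpos (k : ℕ) : 0 < x + k + 1 := by linarith [k.cast_nonneg (α := ℝ)]
  set g : ℕ → ℝ := fun k ↦ Gamma (x + k + 1) / Gamma (x + k + a)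
  have hdiff (k : ℕ) :
      g k - g (k + 1) = (a - 1) * (Gamma (x + k + 1) / Gamma (x + k + 1 + a)) := by
    simp only [g, Nat.cast_succ, ← add_assoc]
    exact Gamma_div_Gamma_sub_Gamma_div_Gamma_add_one ha (hpos k)
  have hg : Antitone g := antitone_nat_of_succ_le fun k ↦ sub_nonneg.1 <| by
    have := Gamma_pos_of_pos (hpos k)
    have := Gamma_pos_of_pos (show 0 < x + k + 1 + a by linarith [hpos k])
    rw [hdiff]
    exact mul_nonneg (by linarith) (by positivity)
  have hlim : Tendsto g atTop (𝓝 0) := by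
    refine ((tendsto_Gamma_add_one_div_Gamma_add_atTop (sub_pos.2 ha)).comp
      (tendsto_atTop_add_const_left _ x tendsto_natCast_atTop_atTop)).congr fun k ↦ ?_
    simp only [Function.comp, g]
    ring_nf
  have hsum := (hasSum_sub_succ_of_antitone hg hlim).div_const (a - 1)
  simp only [hdiff, mul_div_cancel_left₀ _ (sub_pos.2 ha).ne'] at hsum
  rwa [show (g 0 - 0) / (a - 1) = Gamma (x + 1) / ((a - 1) * Gamma (x + a)) by
    simp [g, div_div, mul_comm]] at hsum

end Real

theorem stmt_6_general (α : ℝ) (hα0 : 1 / 2 < α) (m : ℕ) (hm : 1 ≤ m)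
    (d : ℕ → ℝ)
    (hd : ∀ k, m ≤ k →
      d k = 2 * α * Real.Gamma k * Real.Gamma ((m : ℝ) + 2 * α) /
        (Real.Gamma m * Real.Gamma ((k : ℝ) + 1 + 2 * α))) :
    ∑' k : ℕ, ((m + k : ℕ) : ℝ) * d (m + k) = 2 * α * m / (2 * α - 1) := by
  have ha : 1 < 2 * α := by linarith
  have hm0 : (0 : ℝ) < m := by exact_mod_cast hm
  have hΓm := (Gamma_pos_of_pos hm0).ne'
  have hΓma := (Gamma_pos_of_pos (show 0 < (m : ℝ) + 2 * α by linarith)).ne'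
  have hterm (n : ℕ) : ((m + n : ℕ) : ℝ) * d (m + n) =
      2 * α * Gamma (m + 2 * α) / Gamma m * (Gamma (m + n + 1) / Gamma (m + n + 1 + 2 * α)) := by
    rw [hd _ (Nat.le_add_right m n), Nat.cast_add,
      Gamma_add_one (show (m : ℝ) + n ≠ 0 by positivity)]
    ring
  have hsum := (hasSum_Gamma_div_Gamma ha (x := m) (by linarith)).mul_left
    (2 * α * Gamma (m + 2 * α) / Gamma m)
  rw [← funext hterm] at hsum
  rw [hsum.tsum_eq, Gamma_add_one hm0.ne']
  field_simp

theorem stmt_6 (α : ℝ) (hα0 : 1 / 2 < α) (hα1 : α ≤ 1) (m : ℕ) (hm : 1 ≤ m)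
    (d : ℕ → ℝ)
    (hd : ∀ k, m ≤ k →
      d k = 2 * α * Real.Gamma k * Real.Gamma ((m : ℝ) + 2 * α) /
        (Real.Gamma m * Real.Gamma ((k : ℝ) + 1 + 2 * α))) :
    ∑' k : ℕ, ((m + k : ℕ) : ℝ) * d (m + k) = 2 * α * m / (2 * α - 1) :=
  stmt_6_general α hα0 m hm d hd
end

section
/- Let 1/2 < α ≤ 1, m ≥ 1 an integer, and let (x_t)_{t≥2} be a sequence of reals satisfying x_{t+1} = x_t·(1 + 2(1−α)/t) + αm for all t ≥ 2. Set μ = αm/(2α−1). Then there is a constant C > 0 such that |x_t − μt| ≤ C·t^{2(1−α)} for all t ≥ 2. -/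
/-!
Subtracting the linear solution `μ t` turns the recurrence into the homogeneous one
`η (t+1) = η t * (1 + c/t)` with `c = 2(1-α) ≥ 0`. Since `1 + c/t ≤ exp (c/t) ≤ (t/(t-1))^c`,
the quantity `|η t| / (t-1)^c` is non-increasing, so `|η t|` grows at most like `t^c`.
-/

open Real

theorem sub_one_rpow_mul_one_add_div_le {c t : ℝ} (hc : 0 ≤ c) (ht : 1 < t) :
    (t - 1) ^ c * (1 + c / t) ≤ t ^ c := by
  have ht0 : 0 < t := by linarith
  have ht1 : 0 < t - 1 := by linarith
  have hexp : exp (1 / t) ≤ t / (t - 1) := by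
    have h := Real.exp_bound_div_one_sub_of_interval (by positivity : 0 ≤ 1 / t)
      ((div_lt_one ht0).2 ht)
    rwa [one_sub_div ht0.ne', one_div_div] at h
  have hfactor : 1 + c / t ≤ (t / (t - 1)) ^ c :=
    calc 1 + c / t ≤ exp (c / t) := by linarith [add_one_le_exp (c / t)]
      _ = exp (1 / t) ^ c := by rw [← exp_mul]; ring_nf
      _ ≤ (t / (t - 1)) ^ c := rpow_le_rpow (exp_pos _).le hexp hc
  calc (t - 1) ^ c * (1 + c / t) ≤ (t - 1) ^ c * (t / (t - 1)) ^ c := by gcongr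
    _ = t ^ c := by rw [← mul_rpow ht1.le (by positivity), mul_div_cancel₀ _ ht1.ne']

theorem abs_mul_sub_one_rpow_le_of_recurrence {c : ℝ} (hc : 0 ≤ c) {y : ℕ → ℝ} {n : ℕ}
    (hn : 2 ≤ n) (hy : ∀ t, n ≤ t → y (t + 1) = y t * (1 + c / t)) :
    ∀ t, n ≤ t → |y t| * ((n : ℝ) - 1) ^ c ≤ |y n| * ((t : ℝ) - 1) ^ c := by
  intro t ht
  induction t, ht using Nat.le_induction with
  | base => rfl
  | succ t ht ih =>
    have ht1 : (1 : ℝ) < t := by exact_mod_cast (by omega : 1 < t)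
    have hfactor : 0 ≤ 1 + c / t := by positivity
    calc |y (t + 1)| * ((n : ℝ) - 1) ^ c = |y t| * ((n : ℝ) - 1) ^ c * (1 + c / t) := by
          rw [hy t ht, abs_mul, abs_of_nonneg hfactor]; ring
      _ ≤ |y n| * ((t : ℝ) - 1) ^ c * (1 + c / t) := by gcongr
      _ ≤ |y n| * (t : ℝ) ^ c := by
          rw [mul_assoc]; gcongr; exact sub_one_rpow_mul_one_add_div_le hc ht1
      _ = |y n| * (((t + 1 : ℕ) : ℝ) - 1) ^ c := by push_cast; ring_nf

theorem sub_mul_succ_eq_of_recurrence {b c μ : ℝ} (hμ : μ * (1 - c) = b) {x : ℕ → ℝ} {t : ℕ}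
    (ht : t ≠ 0) (h : x (t + 1) = x t * (1 + c / t) + b) :
    x (t + 1) - μ * (t + 1 : ℕ) = (x t - μ * t) * (1 + c / t) := by
  have ht0 : (t : ℝ) ≠ 0 := by exact_mod_cast ht
  rw [h, ← hμ]
  push_cast
  field_simp
  ring

theorem stmt_10_general (α : ℝ) (hα0 : 1 / 2 < α) (hα1 : α ≤ 1) (m : ℕ)
    (x : ℕ → ℝ)
    (hrec : ∀ t : ℕ, 2 ≤ t → x (t + 1) = x t * (1 + 2 * (1 - α) / t) + α * m) :
    ∃ C : ℝ, 0 < C ∧ ∀ t : ℕ, 2 ≤ t →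
      |x t - (α * m / (2 * α - 1)) * t| ≤ C * (t : ℝ) ^ (2 * (1 - α)) := by
  set c := 2 * (1 - α)
  set μ := α * m / (2 * α - 1)
  have hμ : μ * (1 - c) = α * m := by
    have hc : 1 - c = 2 * α - 1 := by ring
    rw [hc]
    exact div_mul_cancel₀ _ (by linarith)
  set η : ℕ → ℝ := fun t => x t - μ * t
  have hη : ∀ t, 2 ≤ t → η (t + 1) = η t * (1 + c / t) := fun t ht =>
    sub_mul_succ_eq_of_recurrence hμ (by omega) (hrec t ht)
  refine ⟨|η 2| + 1, by positivity, fun t ht => ?_⟩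
  have ht1 : (1 : ℝ) ≤ t := by exact_mod_cast (by omega : 1 ≤ t)
  have hbound := abs_mul_sub_one_rpow_le_of_recurrence (by simp only [c]; linarith) le_rfl hη t ht
  rw [Nat.cast_ofNat, show (2 : ℝ) - 1 = 1 by norm_num, one_rpow, mul_one] at hbound
  calc |η t| ≤ |η 2| * ((t : ℝ) - 1) ^ c := hbound
    _ ≤ (|η 2| + 1) * (t : ℝ) ^ c := by
        gcongr <;> linarith

theorem stmt_10 (α : ℝ) (hα0 : 1 / 2 < α) (hα1 : α ≤ 1) (m : ℕ) (hm : 1 ≤ m)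
    (x : ℕ → ℝ)
    (hrec : ∀ t : ℕ, 2 ≤ t → x (t + 1) = x t * (1 + 2 * (1 - α) / t) + α * m) :
    ∃ C : ℝ, 0 < C ∧ ∀ t : ℕ, 2 ≤ t →
      |x t - (α * m / (2 * α - 1)) * t| ≤ C * (t : ℝ) ^ (2 * (1 - α)) :=
  stmt_10_general α hα0 hα1 m x hrec
end
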